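/- arXiv:2506.09509 — 3 statements merged into one kernel-verified Lean document; each statement's English description precedes it below -/
import Mathlib

section
/- Every integer n (positive, negative, or zero) has a unique representation as a finite sum n = Σ_{i≥0} a_i (-b)^i with digits a_i ∈ {0, 1, ..., b-1}, for any integer base b ≥ 2. -/
/-- The `i`-th digit of the base-`b` expansion of `n`. -/
def bDigit (b n i : ℕ) : ℕ := (Nat.digits b n).getD i 0

/-- One step of the base-`(-b)` digit extraction: remove the least digit and divide by `-b`. -/
def negaStep (b m : ℤ) : ℤ := (m - m % b) / (-b)

/-- The `i`-th digit of the base-`(-b)` expansion of the integer `m`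
(digits lie in `{0,...,b-1}` when `b ≥ 2`). -/
def negaDigit (b m : ℤ) (i : ℕ) : ℤ := ((negaStep b)^[i] m) % b

/-- Digitwise addition mod `b` of base-`(-b)` expansions, read off in powers of `+b`. -/
noncomputable def oplusNeg (b α β : ℤ) : ℤ :=
  ∑ᶠ i : ℕ, ((negaDigit b α i + negaDigit b β i) % b) * b ^ i

/-- Digitwise addition mod `b` of base-`b` expansions. -/
noncomputable def oplus (b α β : ℕ) : ℕ :=
  ∑ᶠ i : ℕ, ((bDigit b α i + bDigit b β i) % b) * b ^ i

/-- Digitwise subtraction mod `b` of base-`b` expansions. -/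
noncomputable def ominus (b α β : ℕ) : ℕ :=
  ∑ᶠ i : ℕ, ((((bDigit b α i : ℤ) - (bDigit b β i : ℤ)) % (b : ℤ)).toNat) * b ^ i

/-- Flattening: replace each nonzero base-`b` digit by `1`. -/
noncomputable def flat (b n : ℕ) : ℕ :=
  ∑ᶠ i : ℕ, min (bDigit b n i) 1 * b ^ i

/-- The carry sequence for multiplying `n` by `b+1` in base `b`. -/
def carrySeq (b n : ℕ) : ℕ → ℕ
  | 0 => 0
  | k + 1 => (bDigit b n k + carrySeq b n k) / b + bDigit b n k

/-!
Encode a digit sequence as a polynomial `p` with coefficients in `[0, b)`, so that the number it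
represents is `p.eval (-b)`. Uniqueness: if two such polynomials agree at `x = -b`, their
difference has coefficients of absolute value `< |x|` and vanishes at `x`; reducing mod `x`
kills the constant term, and dividing by `x` lets us peel off the coefficients one by one.
Existence: write `n = r + (-b) q` with `r = n % b`, represent `q` and shift the digits up; this
recursion terminates because `|3n - 1|` strictly decreases along `n ↦ q` until `n = 0`.
-/

open Polynomial

theorem Polynomial.eq_zero_of_eval_eq_zero_of_abs_coeff_lt {x : ℤ} {r : ℤ[X]}
    (hr : ∀ i, |r.coeff i| < |x|) (h : r.eval x = 0) : r = 0 := by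
  have hx : x ≠ 0 := abs_pos.mp ((abs_nonneg _).trans_lt (hr 0))
  induction r using recOnHorner with
  | M0 => rfl
  | MC p a hp0 ha _ =>
    exfalso
    obtain ⟨q, rfl⟩ := X_dvd_iff.mpr hp0
    have hdvd : x ∣ a := ⟨-q.eval x, by simpa [eq_neg_iff_add_eq_zero, add_comm] using h⟩
    refine ha (Int.eq_zero_of_abs_lt_dvd ((abs_dvd _ _).mpr hdvd) ?_)
    simpa [hp0] using hr 0
  | MX p _ ih =>
    rw [ih (fun i => by simpa using hr (i + 1)) (by simpa [hx] using h), zero_mul]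

theorem Polynomial.eq_of_eval_eq_of_coeff_mem_Ico {x : ℤ} {p q : ℤ[X]}
    (hp : ∀ i, 0 ≤ p.coeff i ∧ p.coeff i < |x|) (hq : ∀ i, 0 ≤ q.coeff i ∧ q.coeff i < |x|)
    (h : p.eval x = q.eval x) : p = q :=
  sub_eq_zero.mp <| eq_zero_of_eval_eq_zero_of_abs_coeff_lt (x := x)
    (fun i => by have := hp i; have := hq i; rw [coeff_sub, abs_lt]; omega)
    (by rw [eval_sub, h, sub_self])

/-- `|n|` itself need not decrease: with `r = b - 1`, the step goes `-1 ↦ 1 ↦ 0`. -/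
theorem natAbs_three_mul_sub_one_lt_of_eq_add_neg_mul {b r q n : ℤ} (hb : 2 ≤ b)
    (hr : 0 ≤ r) (hrb : r < b) (hn : n = r + -b * q) (hn0 : n ≠ 0) :
    (3 * q - 1).natAbs < (3 * n - 1).natAbs := by
  rw [neg_mul] at hn
  rcases lt_trichotomy q 0 with hq | rfl | hq
  · have : b * q ≤ 2 * q := by nlinarith
    omega
  · omega
  · have : b * q - b - q + 1 ≥ 0 := by nlinarith
    omega

theorem Polynomial.exists_coeff_mem_Ico_eval_neg {b : ℤ} (hb : 2 ≤ b) (n : ℤ) :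
    ∃ p : ℤ[X], (∀ i, 0 ≤ p.coeff i ∧ p.coeff i < b) ∧ p.eval (-b) = n := by
  by_cases hn0 : n = 0
  · exact ⟨0, fun _ => by simp; omega, by simp [hn0]⟩
  have hr0 : 0 ≤ n % b := Int.emod_nonneg n (by omega)
  have hrb : n % b < b := Int.emod_lt_of_pos n (by omega)
  have hn : n = n % b + -b * -(n / b) := by linarith [Int.mul_ediv_add_emod n b]
  have := natAbs_three_mul_sub_one_lt_of_eq_add_neg_mul hb hr0 hrb hn hn0
  obtain ⟨p, hp, hpn⟩ := exists_coeff_mem_Ico_eval_neg hb (-(n / b))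
  refine ⟨C (n % b) + X * p, fun i => ?_, by rw [eval_add, eval_C, eval_mul, eval_X, hpn, ← hn]⟩
  cases i with
  | zero =>
    rw [coeff_add, coeff_C_zero, coeff_X_mul_zero, add_zero]
    exact ⟨hr0, hrb⟩
  | succ i => rw [coeff_add, coeff_C_succ, coeff_X_mul, zero_add]; exact hp i
termination_by (3 * n - 1).natAbs

theorem Polynomial.existsUnique_coeff_mem_Ico_eval_neg {b : ℤ} (hb : 2 ≤ b) (n : ℤ) :
    ∃! p : ℤ[X], (∀ i, 0 ≤ p.coeff i ∧ p.coeff i < b) ∧ p.eval (-b) = n := by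
  obtain ⟨p, hp, rfl⟩ := exists_coeff_mem_Ico_eval_neg hb n
  have habs : |-b| = b := by rw [abs_neg, abs_of_nonneg (by omega)]
  refine ⟨p, ⟨hp, rfl⟩, fun q ⟨hq, hqp⟩ => ?_⟩
  exact eq_of_eval_eq_of_coeff_mem_Ico (x := -b) (by rwa [habs]) (by rwa [habs]) hqp

/-- Every integer has a unique base-`(-b)` representation with digits in `{0,...,b-1}`. -/
theorem stmt0 (b : ℤ) (hb : 2 ≤ b) (n : ℤ) :
    ∃! f : ℕ →₀ ℤ, (∀ i, 0 ≤ f i ∧ f i < b) ∧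
      n = ∑ i ∈ f.support, f i * (-b) ^ i := by
  let e : ℤ[X] ≃ (ℕ →₀ ℤ) := (toFinsuppIso ℤ).toEquiv.trans AddMonoidAlgebra.coeffEquiv
  refine (e.existsUnique_congr fun p => ?_).mp (existsUnique_coeff_mem_Ico_eval_neg hb n)
  rw [eval_eq_sum, sum_def, eq_comm]
  rfl
end

section
/- For every non-negative integer n and every base b ≥ 2, all digits of the base-b expansion of n ⊕_{-b} (-n) are either 0 or 1, where ⊕_{-b} is digitwise addition mod b of base-(-b) expansions. -/
/-!
Write `T m = -⌊m / b⌋`, so that the `k`-th base-`(-b)` digit of `m` is `T^k m mod b`.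
If `u + v ∈ {0, 1}` then `⌊u / b⌋ + ⌊v / b⌋ ∈ {-1, 0}`, so `T u + T v ∈ {0, 1}` again.
Starting from `u = n`, `v = -n`, the `k`-th coefficient of `n ⊕_{-b} (-n)` is
`(T^k n + T^k (-n)) mod b = T^k n + T^k (-n) ∈ {0, 1}`; both orbits reach `0`, so
`n ⊕_{-b} (-n)` is a finite sum `∑ ε_k b^k` with `ε_k ∈ {0, 1}`, whose base-`b` digits are the `ε_k`.
-/

open Finset Filter Function

theorem sum_range_succ_mul_pow (b : ℕ) (ε : ℕ → ℕ) (M : ℕ) :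
    ∑ j ∈ range (M + 1), ε j * b ^ j = ε 0 + b * ∑ j ∈ range M, ε (j + 1) * b ^ j := by
  rw [sum_range_succ', mul_sum, add_comm]
  simp only [pow_succ, pow_zero, mul_one]
  congr 1
  exact sum_congr rfl fun j _ => by ring

theorem sum_range_mul_pow_div_pow_mod {b : ℕ} {ε : ℕ → ℕ} (hε : ∀ j, ε j < b) (M i : ℕ) :
    (∑ j ∈ range M, ε j * b ^ j) / b ^ i % b = if i < M then ε i else 0 := by
  induction i generalizing M ε with
  | zero =>
    cases M with
    | zero => simp
    | succ M =>
      rw [sum_range_succ_mul_pow, pow_zero, Nat.div_one, Nat.add_mul_mod_self_left,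
        Nat.mod_eq_of_lt (hε 0), if_pos M.succ_pos]
  | succ i ih =>
    cases M with
    | zero => simp
    | succ M =>
      have hb : 0 < b := (Nat.zero_le _).trans_lt (hε 0)
      rw [sum_range_succ_mul_pow, pow_succ', ← Nat.div_div_eq_div_mul,
        Nat.add_mul_div_left _ _ hb, Nat.div_eq_of_lt (hε 0), zero_add,
        ih (fun j => hε (j + 1))]
      simp

theorem bDigit_finsum_mul_pow {b : ℕ} (hb : 2 ≤ b) {ε : ℕ → ℕ} (hε : ∀ j, ε j < b)
    (hfin : (support ε).Finite) (i : ℕ) : bDigit b (∑ᶠ j, ε j * b ^ j) i = ε i := by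
  obtain ⟨M, hM⟩ := hfin.bddAbove
  have hsupp : support (fun j => ε j * b ^ j) ⊆ range (M + 1) := fun j hj => by
    simpa [Nat.lt_succ_iff] using hM (left_ne_zero_of_mul hj)
  rw [bDigit, Nat.getD_digits _ _ hb, finsum_eq_finsetSum_of_support_subset _ hsupp,
    sum_range_mul_pow_div_pow_mod hε]
  split_ifs with hi
  · rfl
  · exact (notMem_support.mp fun h => hi (Nat.lt_succ_of_le (hM h))).symm

section NegaBase

variable {b : ℤ}

theorem negaStep_eq_neg_ediv (hb : b ≠ 0) (m : ℤ) : negaStep b m = -(m / b) := by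
  rw [negaStep, Int.emod_def, sub_sub_cancel, Int.ediv_neg, Int.mul_ediv_cancel_left _ hb]

theorem negaStep_zero : negaStep b 0 = 0 := by simp [negaStep]

/-- `T` maps positive `m` to non-positive values of at most half the size, and negative `m` to
positive values of at most the same size; `|4m - 1|` is strictly decreasing under both moves. -/
theorem natAbs_four_mul_negaStep_sub_one_lt (hb : 2 ≤ b) {m : ℤ} (hm : m ≠ 0) :
    (4 * negaStep b m - 1).natAbs < (4 * m - 1).natAbs := by
  rw [negaStep_eq_neg_ediv (by omega)]
  have hdiv := Int.mul_ediv_add_emod m b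
  have hr0 := Int.emod_nonneg m (by omega : b ≠ 0)
  have hr1 := Int.emod_lt_of_pos m (by omega : 0 < b)
  rcases hm.lt_or_gt with hneg | hpos
  · have hq : m / b ≤ -1 := by nlinarith
    have : m ≤ m / b := by nlinarith
    omega
  · have hq : 0 ≤ m / b := by nlinarith
    have : 2 * (m / b) ≤ m := by nlinarith
    omega

theorem exists_iterate_negaStep_eq_zero (hb : 2 ≤ b) (m : ℤ) : ∃ k, (negaStep b)^[k] m = 0 := by
  induction h : (4 * m - 1).natAbs using Nat.strong_induction_on generalizing m with
  | _ N ih =>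
    by_cases hm : m = 0
    · exact ⟨0, hm⟩
    · obtain ⟨k, hk⟩ := ih _ (h ▸ natAbs_four_mul_negaStep_sub_one_lt hb hm) (negaStep b m) rfl
      exact ⟨k + 1, hk⟩

theorem eventually_iterate_negaStep_eq_zero (hb : 2 ≤ b) (m : ℤ) :
    ∀ᶠ k in atTop, (negaStep b)^[k] m = 0 := by
  obtain ⟨k, hk⟩ := exists_iterate_negaStep_eq_zero hb m
  filter_upwards [eventually_ge_atTop k] with j hj
  rw [← Nat.sub_add_cancel hj, iterate_add_apply, hk, iterate_fixed negaStep_zero]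

theorem negaStep_add_negaStep_mem_Icc (hb : 2 ≤ b) {u v : ℤ} (h : u + v ∈ Set.Icc 0 1) :
    negaStep b u + negaStep b v ∈ Set.Icc 0 1 := by
  rw [negaStep_eq_neg_ediv (by omega), negaStep_eq_neg_ediv (by omega)]
  obtain ⟨h0, h1⟩ := h
  have hu := Int.mul_ediv_add_emod u b
  have hv := Int.mul_ediv_add_emod v b
  have hu0 := Int.emod_nonneg u (by omega : b ≠ 0)
  have hv0 := Int.emod_nonneg v (by omega : b ≠ 0)
  have hu1 := Int.emod_lt_of_pos u (by omega : 0 < b)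
  have hv1 := Int.emod_lt_of_pos v (by omega : 0 < b)
  have hlo : -1 ≤ u / b + v / b := by
    by_contra! hq
    nlinarith
  have hhi : u / b + v / b ≤ 0 := by
    by_contra! hq
    nlinarith
  constructor <;> omega

theorem iterate_negaStep_add_mem_Icc (hb : 2 ≤ b) {u v : ℤ} (h : u + v ∈ Set.Icc 0 1) (k : ℕ) :
    (negaStep b)^[k] u + (negaStep b)^[k] v ∈ Set.Icc 0 1 := by
  induction k with
  | zero => exact h
  | succ k ih =>
    rw [iterate_succ_apply', iterate_succ_apply']
    exact negaStep_add_negaStep_mem_Icc hb ih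

theorem negaDigit_add_negaDigit_emod (hb : 2 ≤ b) {u v : ℤ} (h : u + v ∈ Set.Icc 0 1) (k : ℕ) :
    (negaDigit b u k + negaDigit b v k) % b = (negaStep b)^[k] u + (negaStep b)^[k] v := by
  obtain ⟨h0, h1⟩ := iterate_negaStep_add_mem_Icc hb h k
  rw [negaDigit, negaDigit, ← Int.add_emod]
  exact Int.emod_eq_of_lt h0 (by omega)

theorem oplusNeg_eq_finsum_iterate (hb : 2 ≤ b) {u v : ℤ} (h : u + v ∈ Set.Icc 0 1) :
    oplusNeg b u v = ∑ᶠ k : ℕ, ((negaStep b)^[k] u + (negaStep b)^[k] v) * b ^ k :=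
  finsum_congr fun k => by rw [negaDigit_add_negaDigit_emod hb h]

end NegaBase

theorem bDigit_toNat_oplusNeg_le_one {b : ℕ} (hb : 2 ≤ b) {u v : ℤ} (h : u + v ∈ Set.Icc 0 1)
    (i : ℕ) : bDigit b (oplusNeg b u v).toNat i ≤ 1 := by
  have hB : (2 : ℤ) ≤ b := by exact_mod_cast hb
  set ε : ℕ → ℕ := fun k => ((negaStep b)^[k] u + (negaStep b)^[k] v).toNat
  have hε : ∀ k, (ε k : ℤ) = (negaStep b)^[k] u + (negaStep b)^[k] v := fun k =>
    Int.toNat_of_nonneg (iterate_negaStep_add_mem_Icc hB h k).1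
  have hε_le : ∀ k, ε k ≤ 1 := fun k => by
    have h1 := (iterate_negaStep_add_mem_Icc hB h k).2
    rw [← hε k] at h1
    exact_mod_cast h1
  have hfin : (support ε).Finite := by
    refine eventually_cofinite.mp ?_
    rw [Nat.cofinite_eq_atTop]
    filter_upwards [eventually_iterate_negaStep_eq_zero hB u,
      eventually_iterate_negaStep_eq_zero hB v] with k hu hv
    simp [ε, hu, hv]
  have hoplus : oplusNeg b u v = ((∑ᶠ k, ε k * b ^ k : ℕ) : ℤ) := by
    have hcast : ((∑ᶠ k, ε k * b ^ k : ℕ) : ℤ) = ∑ᶠ k, ((ε k * b ^ k : ℕ) : ℤ) :=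
      (Nat.castAddMonoidHom ℤ).map_finsum_of_injective Nat.cast_injective _
    rw [oplusNeg_eq_finsum_iterate hB h, hcast]
    push_cast [hε]
    rfl
  rw [hoplus, Int.toNat_natCast, bDigit_finsum_mul_pow hb (fun k => (hε_le k).trans_lt hb) hfin]
  exact hε_le i

theorem stmt1 (b : ℕ) (hb : 2 ≤ b) (n : ℕ) (i : ℕ) :
    bDigit b (oplusNeg (b : ℤ) (n : ℤ) (-(n : ℤ))).toNat i ≤ 1 :=
  bDigit_toNat_oplusNeg_le_one hb (by simp) i
end

section
/- For b ≥ 2, the i-th base-(-b) digit of -n can be obtained from the base-b digits of n by a finite-state transduction with carry states in {0,1}: there exist carries c_i ∈ {0,1} with c_0 determined by whether the 0-th position is treated as even, such that -n = Σ e_i (-b)^i where each e_i ∈ {0,...,b-1} depends only on (a_i, c_i, parity of i). -/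
/-!
Since `b ^ i = (-1) ^ i * (-b) ^ i`, the integer `-n` has the out-of-range expansion with digit
`-aᵢ` at even and `aᵢ` at odd positions. A carry `cᵢ ∈ {0, 1}` repairs it: the digit written at
position `i` is `eᵢ = ∓(aᵢ + cᵢ - b cᵢ₊₁)`, so that `eᵢ (-b) ^ i = b ^ (i + 1) cᵢ₊₁ - b ^ i (aᵢ + cᵢ)`
and the sum of the `eᵢ (-b) ^ i` telescopes to `-n` as soon as the carry has died out, which happens
at most two positions after the last nonzero digit of `n`.
-/

/-- The flag marks an even position, where `-(a + c)` has to be written. -/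
def negCarry (b a c : ℕ) : Bool → ℕ
  | true => if a + c = 0 then 0 else 1
  | false => if a + c = b then 1 else 0

def negDigit (b a c : ℕ) (even : Bool) : ℤ :=
  (if even then -1 else 1) * (((a + c : ℕ) : ℤ) - b * negCarry b a c even)

def negCarrySeq (b : ℕ) (a : ℕ → ℕ) : ℕ → ℕ
  | 0 => 0
  | i + 1 => negCarry b (a i) (negCarrySeq b a i) (decide (Even i))

section NegDigit

variable {b a c : ℕ}

theorem negCarry_le_one (even : Bool) : negCarry b a c even ≤ 1 := by
  cases even <;> simp only [negCarry] <;> split_ifs <;> omega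

theorem negDigit_nonneg_and_lt (ha : a < b) (hc : c ≤ 1) (even : Bool) :
    0 ≤ negDigit b a c even ∧ negDigit b a c even < b := by
  cases even <;> simp only [negDigit, negCarry, Bool.false_eq_true, ↓reduceIte] <;> split_ifs <;>
    push_cast <;> omega

theorem negCarry_zero_zero (hb : b ≠ 0) (even : Bool) : negCarry b 0 0 even = 0 := by
  cases even <;> simp [negCarry, hb.symm]

theorem negCarry_zero_false (hb : 2 ≤ b) (hc : c ≤ 1) : negCarry b 0 c false = 0 := by
  simp only [negCarry]
  split_ifs <;> omega

theorem negDigit_zero_zero (hb : b ≠ 0) (even : Bool) : negDigit b 0 0 even = 0 := by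
  simp [negDigit, negCarry_zero_zero hb]

theorem negDigit_mul_neg_pow (i : ℕ) :
    negDigit b a c (decide (Even i)) * (-(b : ℤ)) ^ i =
      (b : ℤ) ^ (i + 1) * negCarry b a c (decide (Even i)) - (b : ℤ) ^ i * (a + c) := by
  rcases Nat.even_or_odd i with hi | hi
  · simp only [negDigit, hi, decide_true, ↓reduceIte, hi.neg_pow]
    push_cast
    ring
  · simp only [negDigit, Nat.not_even_iff_odd.mpr hi, decide_false, Bool.false_eq_true, ↓reduceIte,
      hi.neg_pow]
    push_cast
    ring

end NegDigit

section NegCarrySeq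

variable {b : ℕ} {a : ℕ → ℕ}

theorem negCarrySeq_le_one : ∀ i, negCarrySeq b a i ≤ 1
  | 0 => zero_le_one
  | _ + 1 => negCarry_le_one _

/-- Once the input digits vanish, the carry is killed at the next odd position and stays `0`. -/
theorem negCarrySeq_eq_zero (hb : 2 ≤ b) {m : ℕ} (ha : ∀ i, m ≤ i → a i = 0) :
    ∀ i, m + 2 ≤ i → negCarrySeq b a i = 0 := by
  have hnext : ∀ i, m ≤ i →
      negCarrySeq b a (i + 1) = negCarry b 0 (negCarrySeq b a i) (decide (Even i)) :=
    fun i hi => by rw [negCarrySeq, ha i hi]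
  have hstep : ∀ i, m ≤ i → (negCarrySeq b a i = 0 ∨ ¬ Even i) → negCarrySeq b a (i + 1) = 0 := by
    rintro i hi (hzero | hodd)
    · rw [hnext i hi, hzero, negCarry_zero_zero (by omega)]
    · rw [hnext i hi, decide_eq_false hodd, negCarry_zero_false hb (negCarrySeq_le_one i)]
  have hm2 : negCarrySeq b a (m + 2) = 0 := by
    by_cases hev : Even m
    · exact hstep (m + 1) (by omega) (.inr (by simpa [Nat.even_add_one] using hev))
    · exact hstep (m + 1) (by omega) (.inl (hstep m le_rfl (.inr hev)))
  intro i hi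
  induction i, hi using Nat.le_induction with
  | base => exact hm2
  | succ i hi ih => exact hstep i (by omega) (.inl ih)

theorem sum_negDigit_mul_neg_pow (k : ℕ) :
    ∑ i ∈ Finset.range k,
        negDigit b (a i) (negCarrySeq b a i) (decide (Even i)) * (-(b : ℤ)) ^ i =
      (b : ℤ) ^ k * negCarrySeq b a k - ∑ i ∈ Finset.range k, (a i : ℤ) * (b : ℤ) ^ i := by
  induction k with
  | zero => simp [negCarrySeq]
  | succ k ih =>
    rw [Finset.sum_range_succ, Finset.sum_range_succ, ih, negDigit_mul_neg_pow]
    simp only [negCarrySeq]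
    ring

theorem finsum_negDigit_mul_neg_pow (hb : 2 ≤ b) {m : ℕ} (ha : ∀ i, m ≤ i → a i = 0) :
    ∑ᶠ i : ℕ, negDigit b (a i) (negCarrySeq b a i) (decide (Even i)) * (-(b : ℤ)) ^ i =
      -∑ i ∈ Finset.range (m + 2), (a i : ℤ) * (b : ℤ) ^ i := by
  have hsupp : Function.support (fun i : ℕ =>
      negDigit b (a i) (negCarrySeq b a i) (decide (Even i)) * (-(b : ℤ)) ^ i) ⊆
        Finset.range (m + 2) := by
    refine Function.support_subset_iff'.2 fun i hi => ?_
    rw [Finset.coe_range, Set.mem_Iio, not_lt] at hi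
    rw [ha i (by omega), negCarrySeq_eq_zero hb ha i hi, negDigit_zero_zero (by omega), zero_mul]
  rw [finsum_eq_sum_of_support_subset _ hsupp, sum_negDigit_mul_neg_pow,
    negCarrySeq_eq_zero hb ha (m + 2) le_rfl]
  ring

end NegCarrySeq

section BDigit

variable {b : ℕ}

theorem bDigit_eq (hb : 2 ≤ b) (n i : ℕ) : bDigit b n i = n / b ^ i % b :=
  Nat.getD_digits n i hb

theorem bDigit_lt (hb : 2 ≤ b) (n i : ℕ) : bDigit b n i < b := by
  rw [bDigit_eq hb]
  exact Nat.mod_lt _ (by omega)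

theorem bDigit_eq_zero_of_lt_pow (hb : 2 ≤ b) {n m : ℕ} (hn : n < b ^ m) {i : ℕ} (hi : m ≤ i) :
    bDigit b n i = 0 := by
  rw [bDigit_eq hb, Nat.div_eq_of_lt (hn.trans_le (Nat.pow_le_pow_right (by omega) hi)),
    Nat.zero_mod]

theorem sum_bDigit_mul_pow (hb : 2 ≤ b) (n k : ℕ) :
    ∑ i ∈ Finset.range k, bDigit b n i * b ^ i = n % b ^ k := by
  induction k with
  | zero => simp [Nat.mod_one]
  | succ k ih => rw [Finset.sum_range_succ, ih, Nat.mod_pow_succ, bDigit_eq hb, mul_comm]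

end BDigit

theorem stmt15 (b : ℕ) (hb : 2 ≤ b) :
    ∃ F : ℕ → ℕ → Bool → ℤ, ∃ G : ℕ → ℕ → Bool → ℕ,
      ∀ n : ℕ, ∃ c : ℕ → ℕ, c 0 = 0 ∧ (∀ i, c i ≤ 1) ∧
        (∀ i, c (i + 1) = G (bDigit b n i) (c i) (decide (Even i))) ∧
        (∀ i, 0 ≤ F (bDigit b n i) (c i) (decide (Even i)) ∧
          F (bDigit b n i) (c i) (decide (Even i)) < b) ∧
        (-(n : ℤ)) = ∑ᶠ i : ℕ, F (bDigit b n i) (c i) (decide (Even i)) * (-(b : ℤ)) ^ i := by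
  refine ⟨negDigit b, negCarry b, fun n => ⟨negCarrySeq b (bDigit b n), rfl,
    negCarrySeq_le_one, fun i => rfl, fun i => negDigit_nonneg_and_lt (bDigit_lt hb n i)
      (negCarrySeq_le_one i) _, ?_⟩⟩
  have hn : n < b ^ n := Nat.lt_pow_self (by omega)
  have hn2 : n < b ^ (n + 2) := hn.trans_le (Nat.pow_le_pow_right (by omega) (by omega))
  have hdigits := sum_bDigit_mul_pow hb n (n + 2)
  rw [Nat.mod_eq_of_lt hn2] at hdigits
  rw [finsum_negDigit_mul_neg_pow hb (fun i => bDigit_eq_zero_of_lt_pow hb hn)]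
  exact_mod_cast congrArg (fun x : ℕ => -(x : ℤ)) hdigits.symm
end
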